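/- arXiv:1309.7903 — 3 statements merged into one kernel-verified Lean document; each statement's English description precedes it below -/
import Mathlib

section
/- Let Γ be a group and let R be the intersection of all finite-index subgroups of Γ (in Lean: R = ⨅ over all H : Subgroup Γ with H.index ≠ 0). Then R is a normal subgroup of Γ, and for every n : ℕ the intersection growth of Γ equals that of the quotient Γ/R: i_Γ(n) = i_{Γ⧸R}(n). -/
/-- `Λ_Γ(n)`: the intersection of all subgroups of `Γ` of finite index at most `n`. -/
def interLambda (Γ : Type*) [Group Γ] (n : ℕ) : Subgroup Γ :=
  ⨅ (H : Subgroup Γ) (_ : H.index ≠ 0 ∧ H.index ≤ n), H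

/-- The intersection growth function `i_Γ(n)`. -/
noncomputable def interGrowth (Γ : Type*) [Group Γ] (n : ℕ) : ℕ :=
  (interLambda Γ n).index

/-! The finite residual `R` is normal because conjugation permutes the finite-index subgroups.
Passing to the quotient by `R` loses no finite-index subgroup: each
of them contains `R`, so it is the preimage of its image in `Γ ⧸ R`, which has the same index.
Hence `Λ_Γ(n)` is the preimage of `Λ_{Γ⧸R}(n)`, and preimages under surjections keep the index. -/

def finiteResidual (G : Type*) [Group G] : Subgroup G :=
  ⨅ (H : Subgroup G) (_ : H.index ≠ 0), H

section IntersectionGrowth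

variable {G Q : Type*} [Group G] [Group Q]

theorem finiteResidual_normal : (finiteResidual G).Normal where
  conj_mem x hx g := Subgroup.mem_iInf.2 fun H => Subgroup.mem_iInf.2 fun hH => by
    have hconj : (H.comap (MulAut.conj g).toMonoidHom).index ≠ 0 := by
      rwa [Subgroup.index_comap_of_surjective _ (MulAut.conj g).surjective]
    simpa using Subgroup.mem_iInf.1 (Subgroup.mem_iInf.1 hx _) hconj

theorem interLambda_le {n : ℕ} {H : Subgroup G} (h0 : H.index ≠ 0) (hn : H.index ≤ n) :
    interLambda G n ≤ H :=
  iInf₂_le H ⟨h0, hn⟩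

theorem finiteResidual_le_interLambda (n : ℕ) : finiteResidual G ≤ interLambda G n :=
  le_iInf₂ fun H hH => iInf₂_le H hH.1

theorem comap_interLambda_of_surjective {f : G →* Q} (hf : Function.Surjective f) {n : ℕ}
    (hker : f.ker ≤ interLambda G n) : (interLambda Q n).comap f = interLambda G n := by
  refine le_antisymm (le_iInf₂ fun H hH => ?_) ?_
  · have hkerH : f.ker ≤ H := hker.trans (interLambda_le hH.1 hH.2)
    have hindex := Subgroup.index_map_eq H hf hkerH
    rw [← Subgroup.comap_map_eq_self hkerH]
    exact Subgroup.comap_mono (interLambda_le (hindex ▸ hH.1) (hindex ▸ hH.2))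
  · refine Subgroup.map_le_iff_le_comap.1 (le_iInf₂ fun K hK => ?_)
    have hindex := Subgroup.index_comap_of_surjective K hf
    exact Subgroup.map_le_iff_le_comap.2 (interLambda_le (hindex ▸ hK.1) (hindex ▸ hK.2))

theorem interGrowth_eq_of_surjective {f : G →* Q} (hf : Function.Surjective f) {n : ℕ}
    (hker : f.ker ≤ interLambda G n) : interGrowth G n = interGrowth Q n := by
  rw [interGrowth, ← comap_interLambda_of_surjective hf hker,
    Subgroup.index_comap_of_surjective _ hf, interGrowth]

end IntersectionGrowth

theorem interGrowth_eq_interGrowth_quotient_finiteResidual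
    (Γ : Type*) [Group Γ] (R : Subgroup Γ)
    (hR : R = ⨅ (H : Subgroup Γ) (_ : H.index ≠ 0), H) :
    ∃ hn : R.Normal, ∀ n : ℕ,
      interGrowth Γ n =
        @interGrowth (Γ ⧸ R) (@QuotientGroup.Quotient.group Γ _ R hn) n := by
  change R = finiteResidual Γ at hR
  subst hR
  have := finiteResidual_normal (G := Γ)
  refine ⟨finiteResidual_normal, fun n => interGrowth_eq_of_surjective
    (QuotientGroup.mk'_surjective _) ?_⟩
  rw [QuotientGroup.ker_mk']
  exact finiteResidual_le_interLambda n
end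

section
/- Let m ≥ 5. Then every proper subgroup of the alternating group Alt(m) has index at least m (equivalently: every subgroup H of alternatingGroup (Fin m) with H ≠ ⊤ satisfies H.index ≥ m), and there exists a subgroup of alternatingGroup (Fin m) of index exactly m. -/
/-!
A simple group `G` acts faithfully on the cosets of any proper subgroup `H`, since the kernel of
that action is the normal core of `H`; hence `|G|` divides `[G : H]!`. For `G = Aₘ` with `m ≥ 5`
this gives `m!/2 ≤ [G : H]!`, which forces `[G : H] ≥ m`. The stabilizer of a point has index
exactly `m`, because `Aₘ` acts transitively on `m ≥ 3` letters.
-/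

open MulAction Nat

namespace Subgroup

variable {G : Type*} [Group G]

theorem normalCore_eq_bot_of_ne_top [IsSimpleGroup G] {H : Subgroup G} (hH : H ≠ ⊤) :
    H.normalCore = ⊥ :=
  H.normalCore_normal.eq_bot_or_eq_top.resolve_right
    fun h ↦ hH (top_le_iff.mp (h ▸ H.normalCore_le))

theorem index_normalCore_dvd_factorial_index [Finite G] (H : Subgroup G) :
    H.normalCore.index ∣ H.index ! := by
  rw [normalCore_eq_ker, index_ker, index_eq_card, ← Nat.card_perm]
  exact card_subgroup_dvd_card (toPermHom G (G ⧸ H)).range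

theorem card_dvd_factorial_index_of_ne_top [Finite G] [IsSimpleGroup G] {H : Subgroup G}
    (hH : H ≠ ⊤) : Nat.card G ∣ H.index ! := by
  simpa [normalCore_eq_bot_of_ne_top hH] using H.index_normalCore_dvd_factorial_index

end Subgroup

namespace alternatingGroup

variable {α : Type*} [Fintype α] [DecidableEq α]

theorem card_le_index_of_ne_top (hα : 5 ≤ Nat.card α) {H : Subgroup (alternatingGroup α)}
    (hH : H ≠ ⊤) : Nat.card α ≤ H.index := by
  have := isSimpleGroup hα
  have : Nontrivial α := Finite.one_lt_card_iff_nontrivial.mp (by omega)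
  by_contra! hlt
  have hcard := two_mul_nat_card_alternatingGroup (α := α)
  rw [Nat.card_perm, ← Nat.mul_factorial_pred (by omega)] at hcard
  have hle : Nat.card (alternatingGroup α) ≤ (Nat.card α - 1)! :=
    (Nat.le_of_dvd (factorial_pos _) (Subgroup.card_dvd_factorial_index_of_ne_top hH)).trans
      (Nat.factorial_le (Nat.le_sub_one_of_lt hlt))
  have := (Nat.card α - 1).factorial_pos
  nlinarith

theorem index_stabilizer (hα : 3 ≤ Nat.card α) (a : α) :
    (stabilizer (alternatingGroup α) a).index = Nat.card α :=
  have := isPretransitive_of_three_le_card α hα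
  index_stabilizer_of_transitive _ a

end alternatingGroup

theorem alternatingGroup_proper_subgroup_index_ge (m : ℕ) (hm : 5 ≤ m) :
    (∀ H : Subgroup (alternatingGroup (Fin m)), H ≠ ⊤ → m ≤ H.index) ∧
    ∃ H : Subgroup (alternatingGroup (Fin m)), H.index = m := by
  refine ⟨fun H hH ↦ ?_, stabilizer _ (⟨0, by omega⟩ : Fin m), ?_⟩
  · simpa using alternatingGroup.card_le_index_of_ne_top (by rwa [Nat.card_fin]) hH
  · simpa using alternatingGroup.index_stabilizer (α := Fin m) (by rw [Nat.card_fin]; omega) _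
end

section
/- Let n : ℕ → ℕ be strictly increasing with n 0 ≥ 5, and let G = Π i, alternatingGroup (Fin (n i)) be the Cartesian (unrestricted direct) product. Fix k : ℕ. If H is a subgroup of G of finite index at most n k − 1 (i.e. H.index ≠ 0 and H.index ≤ n k − 1), then H contains every element supported in a single coordinate i ≥ k: for all i ≥ k and all x ∈ alternatingGroup (Fin (n i)), the element Pi.mulSingle i x (which is x in coordinate i and the identity elsewhere) belongs to H. -/
/-!
Restricting `H` to the `i`-th factor gives a subgroup of `alternatingGroup (Fin (n i))` of
index at most `H.index < n k ≤ n i`. A proper subgroup `K` of a simple group `G` has trivial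
normal core, so `G` embeds into the symmetric group on `G ⧸ K` and `|G| ≤ [G : K]!`. Since
`(m - 1)! < m! / 2` for `m ≥ 5`, the alternating group on `m ≥ 5` letters, being simple, has no
proper subgroup of index less than `m`; hence the restriction of `H` is everything.
-/

open Nat

theorem Subgroup.eq_top_of_factorial_index_lt_card {G : Type*} [Group G] [IsSimpleGroup G]
    (K : Subgroup G) (hK : K.index ! < Nat.card G) : K = ⊤ := by
  have : Finite G := Nat.finite_of_card_ne_zero (by omega)
  rcases K.normalCore_normal.eq_bot_or_eq_top with hcore | hcore
  · have hinj : Function.Injective (MulAction.toPermHom G (G ⧸ K)) := by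
      rw [← MonoidHom.ker_eq_bot_iff, ← K.normalCore_eq_ker, hcore]
    have := Nat.card_le_card_of_injective _ hinj
    rw [Nat.card_perm, ← K.index_eq_card] at this
    omega
  · exact top_le_iff.mp (hcore ▸ K.normalCore_le)

theorem Nat.factorial_pred_lt_factorial_div_two {m : ℕ} (hm : 3 ≤ m) : (m - 1)! < m ! / 2 := by
  obtain ⟨j, rfl⟩ : ∃ j, m = j + 1 := ⟨m - 1, by omega⟩
  rw [Nat.add_sub_cancel, Nat.factorial_succ, Nat.lt_iff_add_one_le,
    Nat.le_div_iff_mul_le two_pos]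
  nlinarith [Nat.self_le_factorial j]

theorem alternatingGroup.eq_top_of_index_lt_card {α : Type*} [Fintype α] [DecidableEq α]
    (h5 : 5 ≤ Nat.card α) (K : Subgroup (alternatingGroup α)) (hK : K.index < Nat.card α) :
    K = ⊤ := by
  have := alternatingGroup.isSimpleGroup h5
  have : Nontrivial α := Finite.one_lt_card_iff_nontrivial.mp (by omega)
  refine K.eq_top_of_factorial_index_lt_card ?_
  calc K.index ! ≤ (Nat.card α - 1)! := Nat.factorial_le (by omega)
    _ < (Nat.card α)! / 2 := Nat.factorial_pred_lt_factorial_div_two (by omega)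
    _ = Nat.card (alternatingGroup α) := nat_card_alternatingGroup.symm

theorem Subgroup.index_comap_le {G G' : Type*} [Group G] [Group G'] {H : Subgroup G}
    (hH : H.index ≠ 0) (f : G' →* G) : (H.comap f).index ≤ H.index := by
  rw [H.index_comap f, ← H.relIndex_top_right]
  exact H.relIndex_le_of_le_right le_top (H.relIndex_top_right ▸ hH)

theorem mulSingle_mem_of_small_index
    (n : ℕ → ℕ) (hn : StrictMono n) (h5 : 5 ≤ n 0) (k : ℕ)
    (H : Subgroup (∀ i : ℕ, alternatingGroup (Fin (n i))))
    (hfin : H.index ≠ 0) (hle : H.index ≤ n k - 1) :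
    ∀ i : ℕ, k ≤ i → ∀ x : alternatingGroup (Fin (n i)),
      Pi.mulSingle i x ∈ H := by
  intro i hik
  have h5k : 5 ≤ n k := h5.trans (hn.monotone k.zero_le)
  have hki : n k ≤ n i := hn.monotone hik
  let f := MonoidHom.mulSingle (fun j ↦ alternatingGroup (Fin (n j))) i
  have hcomap : H.comap f = ⊤ := by
    refine alternatingGroup.eq_top_of_index_lt_card (by simpa using h5k.trans hki) _ ?_
    have := H.index_comap_le hfin f
    rw [Nat.card_fin]
    omega
  exact (Subgroup.eq_top_iff' _).mp hcomap
end
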